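/- arXiv:1610.02836 — 2 statements merged into one kernel-verified Lean document; each statement's English description precedes it below -/
import Mathlib

section
/- Let V be an n-dimensional real inner product space (n ≥ 3) and A : V × V → ℝ a nonzero symmetric bilinear form with associated self-adjoint operator T (⟪T x, y⟫ = A(x,y)). Define the (0,4)-tensor R(x,y,z,w) := A(x,z) A(y,w) − A(x,w) A(y,z). If the contraction of R over y and w (i.e., ∑ᵢ R(x, eᵢ, z, eᵢ) over an orthonormal basis eᵢ) equals A(x,z), then T ∘ T = (tr T − 1) • T. -/
namespace OrthonormalBasis

variable {𝕜 E ι : Type*} [RCLike 𝕜] [NormedAddCommGroup E] [InnerProductSpace 𝕜 E] [Fintype ι]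

open scoped InnerProductSpace

theorem sum_inner_mul_inner_map (b : OrthonormalBasis ι 𝕜 E) (T : E →ₗ[𝕜] E) (x y : E) :
    ∑ i, ⟪x, b i⟫_𝕜 * ⟪T (b i), y⟫_𝕜 = ⟪T x, y⟫_𝕜 := by
  conv_rhs => rw [← b.sum_repr' x]
  simp only [map_sum, map_smul, sum_inner, inner_smul_left, inner_conj_symm]

end OrthonormalBasis

open RealInnerProductSpace

theorem semi_isotropic_generalized_ricci_general
    {V : Type*} [NormedAddCommGroup V] [InnerProductSpace ℝ V]
    (n : ℕ)
    (e : OrthonormalBasis (Fin n) ℝ V)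
    (A : V → V → ℝ)
    (T : V →ₗ[ℝ] V) (hT : ∀ x y : V, ⟪T x, y⟫ = A x y)
    (R : V → V → V → V → ℝ)
    (hR : ∀ x y z w : V, R x y z w = A x z * A y w - A x w * A y z)
    (hcontr : ∀ x z : V, (∑ i, R x (e i) z (e i)) = A x z) :
    ∀ x : V, T (T x) = (LinearMap.trace ℝ V T - 1) • T x := by
  intro x
  refine ext_inner_right ℝ fun z => ?_
  have htrace : LinearMap.trace ℝ V T = ∑ i, A (e i) (e i) := by
    simp only [T.trace_eq_sum_inner e, real_inner_comm (T _), hT]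
  have hsquare : ∑ i, A x (e i) * A (e i) z = ⟪T (T x), z⟫ := by
    simp only [← hT, e.sum_inner_mul_inner_map]
  have hricci : A x z * LinearMap.trace ℝ V T - ⟪T (T x), z⟫ = A x z := by
    simpa only [hR, Finset.sum_sub_distrib, ← Finset.mul_sum, htrace, hsquare] using hcontr x z
  rw [inner_smul_left, RCLike.conj_to_real, hT x z]
  linarith

theorem semi_isotropic_generalized_ricci
    {V : Type*} [NormedAddCommGroup V] [InnerProductSpace ℝ V] [FiniteDimensional ℝ V]
    (n : ℕ) (hn : 3 ≤ n) (hdim : Module.finrank ℝ V = n)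
    (e : OrthonormalBasis (Fin n) ℝ V)
    (A : V → V → ℝ) (hA0 : A ≠ fun _ _ => 0) (hAsym : ∀ x y : V, A x y = A y x)
    (T : V →ₗ[ℝ] V) (hT : ∀ x y : V, ⟪T x, y⟫ = A x y)
    (R : V → V → V → V → ℝ)
    (hR : ∀ x y z w : V, R x y z w = A x z * A y w - A x w * A y z)
    (hcontr : ∀ x z : V, (∑ i, R x (e i) z (e i)) = A x z) :
    ∀ x : V, T (T x) = (LinearMap.trace ℝ V T - 1) • T x :=
  semi_isotropic_generalized_ricci_general n e A T hT R hR hcontr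
end

section
/- Let (V, g, R, Ric, Ric₀) be abstract curvature data with n = dim V ≥ 3, and suppose DRic = a • Ric and DRic₀ = a • Ric₀ (Ricci recurrence in a fixed direction with scalar a). Define P(x,y)z := R(x,y)z − (1/(n−1))(Ric(x,z)y − Ric(y,z)x) and H(x,y)z := R(x,y)z − (1/(2(n−1)))(Ric(x,z)y − Ric(y,z)x + g(x,z)Ric₀y − g(y,z)Ric₀x), with DP and DH the corresponding Leibniz expansions using DR, DRic, DRic₀, g. Then DH = a • H if and only if DP = a • P. -/
/-!
Both `H` and `P` differ from `R` by a multiple of a tensor built linearly from `Ric`, `Ric₀` and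
`g`, and likewise `DH`, `DP` from `DR` with `DRic`, `DRic₀`. Ricci recurrence makes these
correction terms recurrent with form `a`, so each of `H` and `P` is recurrent with form `a`
exactly when `R` is.
-/

open RealInnerProductSpace

section Recurrence

variable {𝕜 V : Type*} [CommRing 𝕜] [AddCommGroup V] [Module 𝕜 V]

theorem eq_smul_iff_of_sub_eq_smul_sub {a : 𝕜} {t t' r r' c c' : V}
    (ht : t = r - c) (ht' : t' = r' - c') (hc : c' = a • c) :
    t' = a • t ↔ r' = a • r := by
  rw [ht, ht', hc, smul_sub, sub_left_inj]

theorem smul_ricci_sub_recurrent {a : 𝕜} {Ric DRic : V → V → 𝕜}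
    (hRic : ∀ x y, DRic x y = a * Ric x y) (c : 𝕜) (x y z : V) :
    c • (DRic x z • y - DRic y z • x) = a • c • (Ric x z • y - Ric y z • x) := by
  rw [hRic, hRic]
  module

theorem smul_ricci_metric_sub_recurrent {a : 𝕜} {g Ric DRic : V → V → 𝕜}
    {Ric₀ DRic₀ : V → V}
    (hRic : ∀ x y, DRic x y = a * Ric x y) (hRic₀ : ∀ x, DRic₀ x = a • Ric₀ x)
    (c : 𝕜) (x y z : V) :
    c • (DRic x z • y - DRic y z • x + g x z • DRic₀ y - g y z • DRic₀ x) =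
      a • c • (Ric x z • y - Ric y z • x + g x z • Ric₀ y - g y z • Ric₀ x) := by
  rw [hRic, hRic, hRic₀, hRic₀]
  module

end Recurrence

theorem mprojective_iff_projective_recurrent_general
    {V : Type*} [NormedAddCommGroup V] [InnerProductSpace ℝ V]
    (n : ℕ)
    (R DR : V → V → V → V)
    (Ric DRic : V → V → ℝ) (Ric₀ DRic₀ : V →ₗ[ℝ] V)
    (a : ℝ)
    (hRicRec : ∀ x y : V, DRic x y = a * Ric x y)
    (hRic₀Rec : ∀ x : V, DRic₀ x = a • Ric₀ x)
    (P DP H DH : V → V → V → V)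
    (hP : ∀ x y z : V, P x y z =
      R x y z - (1 / ((n : ℝ) - 1)) • (Ric x z • y - Ric y z • x))
    (hDP : ∀ x y z : V, DP x y z =
      DR x y z - (1 / ((n : ℝ) - 1)) • (DRic x z • y - DRic y z • x))
    (hH : ∀ x y z : V, H x y z =
      R x y z - (1 / (2 * ((n : ℝ) - 1))) •
        (Ric x z • y - Ric y z • x + ⟪x, z⟫ • Ric₀ y - ⟪y, z⟫ • Ric₀ x))
    (hDH : ∀ x y z : V, DH x y z =
      DR x y z - (1 / (2 * ((n : ℝ) - 1))) •
        (DRic x z • y - DRic y z • x + ⟪x, z⟫ • DRic₀ y - ⟪y, z⟫ • DRic₀ x)) :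
    (∀ x y z : V, DH x y z = a • H x y z) ↔ (∀ x y z : V, DP x y z = a • P x y z) := by
  have hH_iff (x y z : V) : DH x y z = a • H x y z ↔ DR x y z = a • R x y z :=
    eq_smul_iff_of_sub_eq_smul_sub (hH x y z) (hDH x y z)
      (smul_ricci_metric_sub_recurrent (g := fun x z => ⟪x, z⟫) hRicRec hRic₀Rec _ x y z)
  have hP_iff (x y z : V) : DP x y z = a • P x y z ↔ DR x y z = a • R x y z :=
    eq_smul_iff_of_sub_eq_smul_sub (hP x y z) (hDP x y z)
      (smul_ricci_sub_recurrent hRicRec _ x y z)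
  simp only [hH_iff, hP_iff]

theorem mprojective_iff_projective_recurrent
    {V : Type*} [NormedAddCommGroup V] [InnerProductSpace ℝ V] [FiniteDimensional ℝ V]
    (n : ℕ) (hn : 3 ≤ n) (hdim : Module.finrank ℝ V = n)
    (R DR : V → V → V → V)
    (Ric DRic : V → V → ℝ) (Ric₀ DRic₀ : V →ₗ[ℝ] V)
    (hRic : ∀ x y : V, Ric x y = ⟪Ric₀ x, y⟫)
    (hDRic : ∀ x y : V, DRic x y = ⟪DRic₀ x, y⟫)
    (a : ℝ)
    (hRicRec : ∀ x y : V, DRic x y = a * Ric x y)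
    (hRic₀Rec : ∀ x : V, DRic₀ x = a • Ric₀ x)
    (P DP H DH : V → V → V → V)
    (hP : ∀ x y z : V, P x y z =
      R x y z - (1 / ((n : ℝ) - 1)) • (Ric x z • y - Ric y z • x))
    (hDP : ∀ x y z : V, DP x y z =
      DR x y z - (1 / ((n : ℝ) - 1)) • (DRic x z • y - DRic y z • x))
    (hH : ∀ x y z : V, H x y z =
      R x y z - (1 / (2 * ((n : ℝ) - 1))) •
        (Ric x z • y - Ric y z • x + ⟪x, z⟫ • Ric₀ y - ⟪y, z⟫ • Ric₀ x))
    (hDH : ∀ x y z : V, DH x y z =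
      DR x y z - (1 / (2 * ((n : ℝ) - 1))) •
        (DRic x z • y - DRic y z • x + ⟪x, z⟫ • DRic₀ y - ⟪y, z⟫ • DRic₀ x)) :
    (∀ x y z : V, DH x y z = a • H x y z) ↔ (∀ x y z : V, DP x y z = a • P x y z) :=
  mprojective_iff_projective_recurrent_general n R DR Ric DRic Ric₀ DRic₀ a hRicRec hRic₀Rec P DP H
    DH hP hDP hH hDH
end
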